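/- Suppose that for each ρ ∈ (0,1], Ψ_ρ : Ω → ℂ is analytic on Ω and satisfies Ψ_ρ(z) = φ^{(ρ)}(z)/φ(z) for all z ∈ Ω ∖ (S + Λ), where φ^{(ρ)}(z) = ∑_{m∈Λ} 2^{−ρ|m|} ϕ(z − m). Then for every compact set K ⊂ ℂ there exists a constant C_K > 0 such that |Ψ_ρ(z + m)| ≤ C_K ρ^{−b} (1 + |m|)^{−b} for every ρ ∈ (0,1], every m ∈ Λ, and every z ∈ K ∩ Ω. -/

import Mathlib

open Complex MeasureTheory Set Filter

noncomputable section

/-- The Gaussian integer lattice point associated to a pair of integers. -/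
def latPt (p : ℤ × ℤ) : ℂ := (p.1 : ℂ) + (p.2 : ℂ) * Complex.I

/-- The open unit square `Q = (0,1) × (0,1)` in `ℂ`. -/
def QSet : Set ℂ := {z : ℂ | z.re ∈ Set.Ioo (0:ℝ) 1 ∧ z.im ∈ Set.Ioo (0:ℝ) 1}

/-- The set `S + Λ` of all translates of points of `S` by lattice points. -/
def SLat (S : Finset ℂ) : Set ℂ := {z : ℂ | ∃ s ∈ S, ∃ p : ℤ × ℤ, z = s + latPt p}

/-!
Shifting the summation index, `Ψ_ρ(z + m) = ∑_q 2^{-ρ|q+m|} ϕ(z - q) / φ(z)`. Every term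
`ϕ(z - q)` is bounded by `A (1 + |q|)^{-b}` except the one with `z - q` in the unit cell, which
may sit near a pole. Subtracting `2^{-ρ|q₀+m|} φ(z)` removes that term, and since `|φ| ≥ c` the
rest is controlled by `2^{-ρ|q₀+m|}` and by the convolution `∑_q 2^{-ρ|q+m|} (1 + |q|)^{-b}`,
both `O(ρ^{-b} (1 + |m|)^{-b})` because `2^{-ρt} ≲ ρ^{-b} (1 + t)^{-b}` and `b > 2`.
Off the countable set `S + Λ` this gives the bound, and continuity of `Ψ_ρ` extends it to `K ∩ Ω`.
-/

open Metric

lemma latPt_add (p q : ℤ × ℤ) : latPt (p + q) = latPt p + latPt q := by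
  simp only [latPt, Prod.fst_add, Prod.snd_add, Int.cast_add]; ring

lemma latPt_neg (p : ℤ × ℤ) : latPt (-p) = -latPt p := by
  simp only [latPt, Prod.fst_neg, Prod.snd_neg, Int.cast_neg]; ring

@[simp] lemma latPt_re (p : ℤ × ℤ) : (latPt p).re = p.1 := by simp [latPt]

@[simp] lemma latPt_im (p : ℤ × ℤ) : (latPt p).im = p.2 := by simp [latPt]

lemma isOpen_QSet : IsOpen QSet :=
  (isOpen_Ioo.preimage continuous_re).inter (isOpen_Ioo.preimage continuous_im)

lemma closure_QSet_subset_closedBall : closure QSet ⊆ closedBall 0 2 := by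
  refine closure_minimal (fun w ⟨⟨h1, h2⟩, ⟨h3, h4⟩⟩ => ?_) isClosed_closedBall
  rw [mem_closedBall, dist_zero_right]
  refine (norm_le_abs_re_add_abs_im w).trans ?_
  rw [abs_of_pos h1, abs_of_pos h3]
  linarith

def cellIndex (z : ℂ) : ℤ × ℤ := (⌊z.re⌋, ⌊z.im⌋)

lemma eq_cellIndex_of_sub_latPt_mem_QSet {z : ℂ} {q : ℤ × ℤ} (h : z - latPt q ∈ QSet) :
    q = cellIndex z := by
  obtain ⟨⟨h1, h2⟩, ⟨h3, h4⟩⟩ := h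
  simp only [sub_re, sub_im, latPt_re, latPt_im] at h1 h2 h3 h4
  refine Prod.ext (Int.floor_eq_iff.mpr ⟨?_, ?_⟩).symm (Int.floor_eq_iff.mpr ⟨?_, ?_⟩).symm <;>
    linarith

lemma norm_latPt_cellIndex_le (z : ℂ) : ‖latPt (cellIndex z)‖ ≤ ‖z‖ + 2 := by
  have hcell : ‖z - latPt (cellIndex z)‖ ≤ 2 := by
    refine (norm_le_abs_re_add_abs_im _).trans ?_
    simp only [sub_re, sub_im, latPt_re, latPt_im, cellIndex, Int.self_sub_floor]
    rw [abs_of_nonneg (Int.fract_nonneg _), abs_of_nonneg (Int.fract_nonneg _)]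
    linarith [Int.fract_lt_one z.re, Int.fract_lt_one z.im]
  calc ‖latPt (cellIndex z)‖ = ‖z - (z - latPt (cellIndex z))‖ := by rw [sub_sub_cancel]
    _ ≤ ‖z‖ + ‖z - latPt (cellIndex z)‖ := norm_sub_le _ _
    _ ≤ ‖z‖ + 2 := by linarith

lemma countable_SLat (S : Finset ℂ) : (SLat S).Countable := by
  refine (S.finite_toSet.countable.image2 (countable_univ (α := ℤ × ℤ))
    fun s p => s + latPt p).mono ?_
  rintro z ⟨s, hs, p, rfl⟩
  exact ⟨s, hs, p, trivial, rfl⟩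

lemma add_latPt_notMem_SLat {S : Finset ℂ} {z : ℂ} (hz : z ∉ SLat S) (m : ℤ × ℤ) :
    z + latPt m ∉ SLat S := by
  rintro ⟨s, hs, p, hp⟩
  refine hz ⟨s, hs, p + -m, ?_⟩
  rw [latPt_add, latPt_neg]
  linear_combination hp

lemma one_add_rpow_le_mul_two_rpow {b x : ℝ} (hb : 0 < b) (hx : 0 ≤ x) :
    (1 + x) ^ b ≤ (1 + b / Real.log 2) ^ b * 2 ^ x := by
  set s := Real.log 2 / b
  have hs : 0 < s := div_pos (Real.log_pos one_lt_two) hb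
  have hlin : 1 + x ≤ (1 + 1 / s) * Real.exp (s * x) := by
    have h1 := Real.one_le_exp (mul_nonneg hs.le hx)
    have h2 := Real.add_one_le_exp (s * x)
    have h3 : x ≤ Real.exp (s * x) / s := by rw [le_div_iff₀ hs]; linarith
    calc 1 + x ≤ Real.exp (s * x) + Real.exp (s * x) / s := by linarith
      _ = _ := by ring
  have hexp : Real.exp (s * x) ^ b = 2 ^ x := by
    rw [← Real.exp_mul, Real.rpow_def_of_pos two_pos]
    congr 1
    simp only [s]
    field_simp
  calc (1 + x) ^ b ≤ ((1 + 1 / s) * Real.exp (s * x)) ^ b :=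
        Real.rpow_le_rpow (by linarith) hlin hb.le
    _ = (1 + b / Real.log 2) ^ b * 2 ^ x := by
        rw [Real.mul_rpow (by positivity) (Real.exp_nonneg _), hexp, one_div_div]

lemma two_rpow_neg_mul_le {b ρ t : ℝ} (hb : 0 < b) (hρ : ρ ∈ Ioc (0 : ℝ) 1) (ht : 0 ≤ t) :
    (2 : ℝ) ^ (-(ρ * t)) ≤ (1 + b / Real.log 2) ^ b * ρ ^ (-b) * (1 + t) ^ (-b) := by
  obtain ⟨hρ0, hρ1⟩ := hρ
  have hx : 0 ≤ ρ * t := mul_nonneg hρ0.le ht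
  calc (2 : ℝ) ^ (-(ρ * t)) ≤ (1 + b / Real.log 2) ^ b * (1 + ρ * t) ^ (-b) := by
        rw [Real.rpow_neg zero_le_two, Real.rpow_neg (by linarith), ← div_eq_mul_inv,
          inv_eq_one_div, div_le_div_iff₀ (by positivity) (by positivity), one_mul]
        exact one_add_rpow_le_mul_two_rpow hb hx
    _ ≤ (1 + b / Real.log 2) ^ b * (ρ * (1 + t)) ^ (-b) := by
        refine mul_le_mul_of_nonneg_left ?_ (by positivity)
        exact Real.rpow_le_rpow_of_nonpos (by positivity) (by nlinarith) (by linarith)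
    _ = _ := by rw [Real.mul_rpow hρ0.le (by linarith : (0 : ℝ) ≤ 1 + t), mul_assoc]

lemma one_add_rpow_neg_le_of_le_add {b s t u : ℝ} (hb : 0 ≤ b) (hs : 0 ≤ s) (ht : 0 ≤ t)
    (hu : 0 ≤ u) (h : u ≤ s + t) : (1 + s) ^ (-b) ≤ (1 + t) ^ b * (1 + u) ^ (-b) := by
  calc (1 + s) ^ (-b) = (1 + t) ^ b * ((1 + t) * (1 + s)) ^ (-b) := by
        rw [Real.mul_rpow (by linarith) (by linarith), ← mul_assoc,
          ← Real.rpow_add (by linarith : (0 : ℝ) < 1 + t), add_neg_cancel, Real.rpow_zero, one_mul]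
    _ ≤ (1 + t) ^ b * (1 + u) ^ (-b) := by
        refine mul_le_mul_of_nonneg_left ?_ (by positivity)
        exact Real.rpow_le_rpow_of_nonpos (by linarith) (by nlinarith) (by linarith)

lemma one_add_rpow_neg_mul_le_of_le_add {b s t u : ℝ} (hb : 0 ≤ b) (hs : 0 ≤ s) (ht : 0 ≤ t)
    (hu : 0 ≤ u) (h : u ≤ s + t) :
    (1 + s) ^ (-b) * (1 + t) ^ (-b) ≤
      2 ^ b * (1 + u) ^ (-b) * ((1 + s) ^ (-b) + (1 + t) ^ (-b)) := by
  have half {r : ℝ} (hr : u ≤ 2 * r) : (1 + r) ^ (-b) ≤ 2 ^ b * (1 + u) ^ (-b) := by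
    calc (1 + r) ^ (-b) ≤ ((1 + u) / 2) ^ (-b) :=
          Real.rpow_le_rpow_of_nonpos (by linarith) (by linarith) (by linarith)
      _ = 2 ^ b * (1 + u) ^ (-b) := by
          rw [Real.div_rpow (by linarith) zero_le_two, Real.rpow_neg zero_le_two, div_inv_eq_mul,
            mul_comm]
  rcases le_total t s with hts | hst
  · calc (1 + s) ^ (-b) * (1 + t) ^ (-b) ≤ 2 ^ b * (1 + u) ^ (-b) * (1 + t) ^ (-b) := by
          gcongr; exact half (by linarith)
      _ ≤ _ := by gcongr; exact le_add_of_nonneg_left (by positivity)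
  · calc (1 + s) ^ (-b) * (1 + t) ^ (-b) ≤ (1 + s) ^ (-b) * (2 ^ b * (1 + u) ^ (-b)) := by
          gcongr; exact half (by linarith)
      _ ≤ _ := by rw [mul_comm]; gcongr; exact le_add_of_nonneg_right (by positivity)

lemma two_rpow_neg_mul_norm_add_le {E : Type*} [SeminormedAddCommGroup E] {b ρ : ℝ} (hb : 0 < b)
    (hρ : ρ ∈ Ioc (0 : ℝ) 1) (x y : E) :
    (2 : ℝ) ^ (-(ρ * ‖x + y‖)) ≤
      (1 + b / Real.log 2) ^ b * (1 + ‖x‖) ^ b * ρ ^ (-b) * (1 + ‖y‖) ^ (-b) := by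
  have hρ0 := hρ.1
  have hy : ‖y‖ ≤ ‖x + y‖ + ‖x‖ := by
    simpa using norm_sub_le (x + y) x
  calc (2 : ℝ) ^ (-(ρ * ‖x + y‖)) ≤ (1 + b / Real.log 2) ^ b * ρ ^ (-b) * (1 + ‖x + y‖) ^ (-b) :=
        two_rpow_neg_mul_le hb hρ (norm_nonneg _)
    _ ≤ (1 + b / Real.log 2) ^ b * ρ ^ (-b) * ((1 + ‖x‖) ^ b * (1 + ‖y‖) ^ (-b)) := by
        refine mul_le_mul_of_nonneg_left ?_ (by positivity)
        exact one_add_rpow_neg_le_of_le_add hb.le (norm_nonneg _) (norm_nonneg _) (norm_nonneg _) hy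
    _ = _ := by ring

lemma summable_one_add_norm_latPt_rpow_neg {b : ℝ} (hb : 2 < b) :
    Summable fun p : ℤ × ℤ => (1 + ‖latPt p‖) ^ (-b) := by
  rw [← (finTwoArrowEquiv ℤ).summable_iff]
  refine (EisensteinSeries.summable_one_div_norm_rpow hb).of_norm_bounded_eventually ?_
  filter_upwards [(Set.finite_singleton (0 : Fin 2 → ℤ)).compl_mem_cofinite] with x hx
  have hx0 : 0 < ‖x‖ := norm_pos_iff.mpr hx
  have hxp : ‖x‖ ≤ ‖latPt (finTwoArrowEquiv ℤ x)‖ := by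
    refine (pi_norm_le_iff_of_nonneg (norm_nonneg _)).mpr (Fin.forall_fin_two.mpr ⟨?_, ?_⟩)
    · simpa [Int.norm_eq_abs] using abs_re_le_norm (latPt (finTwoArrowEquiv ℤ x))
    · simpa [Int.norm_eq_abs] using abs_im_le_norm (latPt (finTwoArrowEquiv ℤ x))
  rw [Function.comp_apply, Real.norm_of_nonneg (by positivity)]
  exact Real.rpow_le_rpow_of_nonpos hx0 (by linarith) (by linarith)

lemma tsum_two_rpow_neg_mul_le {b : ℝ} (hb : 2 < b) :
    ∃ C ≥ 0, ∀ ρ ∈ Ioc (0 : ℝ) 1, ∀ m : ℤ × ℤ,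
      ∑' q : ℤ × ℤ, (2 : ℝ) ^ (-(ρ * ‖latPt (q + m)‖)) * (1 + ‖latPt q‖) ^ (-b) ≤
        C * ρ ^ (-b) * (1 + ‖latPt m‖) ^ (-b) := by
  have hb0 : 0 < b := by linarith
  set w : ℤ × ℤ → ℝ := fun p => (1 + ‖latPt p‖) ^ (-b)
  have hw : Summable w := summable_one_add_norm_latPt_rpow_neg hb
  set T := ∑' p, w p
  have hT : 0 ≤ T := tsum_nonneg fun p => by positivity
  refine ⟨(1 + b / Real.log 2) ^ b * 2 ^ b * (2 * T), by positivity, fun ρ hρ m => ?_⟩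
  have hρ0 := hρ.1
  set B := (1 + b / Real.log 2) ^ b * ρ ^ (-b) * 2 ^ b * (1 + ‖latPt m‖) ^ (-b)
  have hwm : Summable fun q => w (q + m) := (Equiv.addRight m).summable_iff.mpr hw
  have hmaj : Summable fun q => B * (w (q + m) + w q) := (hwm.add hw).mul_left B
  have hterm (q : ℤ × ℤ) :
      (2 : ℝ) ^ (-(ρ * ‖latPt (q + m)‖)) * w q ≤ B * (w (q + m) + w q) := by
    have hm : ‖latPt m‖ ≤ ‖latPt (q + m)‖ + ‖latPt q‖ := by
      simpa [latPt_add] using norm_sub_le (latPt (q + m)) (latPt q)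
    calc (2 : ℝ) ^ (-(ρ * ‖latPt (q + m)‖)) * w q
        ≤ (1 + b / Real.log 2) ^ b * ρ ^ (-b) * (w (q + m) * w q) := by
          rw [← mul_assoc]
          gcongr
          exact two_rpow_neg_mul_le hb0 hρ (norm_nonneg _)
      _ ≤ (1 + b / Real.log 2) ^ b * ρ ^ (-b) *
            (2 ^ b * (1 + ‖latPt m‖) ^ (-b) * (w (q + m) + w q)) := by
          refine mul_le_mul_of_nonneg_left ?_ (by positivity)
          exact one_add_rpow_neg_mul_le_of_le_add hb0.le (norm_nonneg _) (norm_nonneg _)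
            (norm_nonneg _) hm
      _ = B * (w (q + m) + w q) := by ring
  calc ∑' q, (2 : ℝ) ^ (-(ρ * ‖latPt (q + m)‖)) * w q ≤ ∑' q, B * (w (q + m) + w q) :=
        (hmaj.of_nonneg_of_le (fun q => by positivity) hterm).tsum_le_tsum hterm hmaj
    _ = B * (T + T) := by
        have hwmT : ∑' q, w (q + m) = T := (Equiv.addRight m).tsum_eq w
        rw [tsum_mul_left, hwm.tsum_add hw, hwmT]
    _ = _ := by ring

lemma exists_norm_le_rpow_neg_of_notMem_thickening {Ω S : Set ℂ} {ϕ : ℂ → ℂ} {b d ε : ℝ}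
    (hb : 0 ≤ b) (hε : 0 < ε) (hϕ : ContinuousOn ϕ Sᶜ)
    (hdecay : ∀ z ∈ Ω, z ∉ closure QSet → (1 + ‖z‖) ^ b * ‖ϕ z‖ ≤ d) :
    ∃ A ≥ 0, ∀ w ∈ Ω, w ∉ thickening ε S → ‖ϕ w‖ ≤ A * (1 + ‖w‖) ^ (-b) := by
  have hK : IsCompact (closure QSet \ thickening ε S) :=
    ((isCompact_closedBall 0 2).of_isClosed_subset isClosed_closure
      closure_QSet_subset_closedBall).diff isOpen_thickening
  obtain ⟨M, hM⟩ := hK.exists_bound_of_continuousOn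
    (hϕ.mono fun w hw hwS => hw.2 (self_subset_thickening hε S hwS))
  refine ⟨max d (max M 0 * 3 ^ b), le_max_of_le_right (by positivity), fun w hwΩ hwS => ?_⟩
  have hw : 0 < 1 + ‖w‖ := by positivity
  rw [Real.rpow_neg hw.le, le_mul_inv_iff₀ (by positivity)]
  by_cases hwQ : w ∈ closure QSet
  · have hw2 : ‖w‖ ≤ 2 := by simpa using closure_QSet_subset_closedBall hwQ
    calc ‖ϕ w‖ * (1 + ‖w‖) ^ b ≤ max M 0 * 3 ^ b := by
          gcongr
          · exact (hM w ⟨hwQ, hwS⟩).trans (le_max_left _ _)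
          · linarith
      _ ≤ _ := le_max_right _ _
  · rw [mul_comm]
    exact (hdecay w hwΩ hwQ).trans (le_max_left _ _)

lemma exists_norm_sub_latPt_le_of_ne_cellIndex {Ω : Set ℂ} {S : Finset ℂ} {ϕ : ℂ → ℂ}
    {b d R : ℝ}
    (hper : ∀ z ∈ Ω, ∀ p : ℤ × ℤ, z + latPt p ∈ Ω) (hSQ : (S : Set ℂ) ⊆ QSet)
    (hϕ : ContinuousOn ϕ (S : Set ℂ)ᶜ) (hb : 0 ≤ b)
    (hdecay : ∀ z ∈ Ω, z ∉ closure QSet → (1 + ‖z‖) ^ b * ‖ϕ z‖ ≤ d) :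
    ∃ A ≥ 0, ∀ z ∈ Ω, ‖z‖ ≤ R → ∀ q ≠ cellIndex z,
      ‖ϕ (z - latPt q)‖ ≤ A * (1 + R) ^ b * (1 + ‖latPt q‖) ^ (-b) := by
  obtain ⟨ε, hε, hεQ⟩ := S.finite_toSet.isCompact.exists_thickening_subset_open isOpen_QSet hSQ
  obtain ⟨A, hA, hϕA⟩ := exists_norm_le_rpow_neg_of_notMem_thickening hb hε hϕ hdecay
  refine ⟨A, hA, fun z hz hzR q hq => ?_⟩
  have hzq : z - latPt q ∈ Ω := by simpa [latPt_neg, ← sub_eq_add_neg] using hper z hz (-q)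
  have hq' : ‖latPt q‖ ≤ ‖z - latPt q‖ + ‖z‖ := by
    have := norm_sub_le z (z - latPt q)
    rw [sub_sub_cancel] at this
    linarith
  calc ‖ϕ (z - latPt q)‖ ≤ A * (1 + ‖z - latPt q‖) ^ (-b) :=
        hϕA _ hzq fun h => hq (eq_cellIndex_of_sub_latPt_mem_QSet (hεQ h))
    _ ≤ A * ((1 + ‖z‖) ^ b * (1 + ‖latPt q‖) ^ (-b)) := by
        gcongr
        exact one_add_rpow_neg_le_of_le_add hb (norm_nonneg _) (norm_nonneg _) (norm_nonneg _) hq'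
    _ ≤ A * ((1 + R) ^ b * (1 + ‖latPt q‖) ^ (-b)) := by gcongr
    _ = _ := by ring

lemma norm_tsum_mul_div_tsum_le {ι : Type*} {f : ι → ℂ} {a w : ι → ℝ} {q₀ : ι} {A c : ℝ}
    (hf : Summable fun q => ‖f q‖) (ha0 : ∀ q, 0 ≤ a q) (ha1 : ∀ q, a q ≤ 1)
    (hw0 : ∀ q, 0 ≤ w q) (hw : Summable w) (hA : 0 ≤ A) (hfw : ∀ q ≠ q₀, ‖f q‖ ≤ A * w q)
    (hc : 0 < c) (hD : c ≤ ‖∑' q, f q‖) :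
    ‖(∑' q, (a q : ℂ) * f q) / ∑' q, f q‖ ≤
      a q₀ + A * (∑' q, a q * w q + a q₀ * ∑' q, w q) / c := by
  set D := ∑' q, f q
  set X := A * (∑' q, a q * w q + a q₀ * ∑' q, w q)
  have hD0 : 0 < ‖D‖ := hc.trans_le hD
  have haf : Summable fun q => (a q : ℂ) * f q :=
    hf.of_norm_bounded fun q => by
      rw [norm_mul, norm_real, Real.norm_of_nonneg (ha0 q)]
      exact mul_le_of_le_one_left (norm_nonneg _) (ha1 q)
  have haw : Summable fun q => a q * w q :=
    hw.of_nonneg_of_le (fun q => mul_nonneg (ha0 q) (hw0 q))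
      fun q => mul_le_of_le_one_left (hw0 q) (ha1 q)
  -- subtracting `a q₀ * D` removes the `q₀`-th term, the only one not controlled by `w`
  have hsplit : ∑' q, (a q : ℂ) * f q = a q₀ * D + ∑' q, ((a q - a q₀ : ℝ) : ℂ) * f q := by
    simp only [ofReal_sub, sub_mul]
    rw [haf.tsum_sub (hf.of_norm.mul_left _), tsum_mul_left]
    ring
  have hterm (q : ι) : ‖((a q - a q₀ : ℝ) : ℂ) * f q‖ ≤ A * (a q * w q + a q₀ * w q) := by
    rw [norm_mul, norm_real, Real.norm_eq_abs]
    rcases eq_or_ne q q₀ with rfl | hq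
    · simp only [sub_self, abs_zero, zero_mul]
      have := ha0 q; have := hw0 q
      positivity
    · have hdiff : |a q - a q₀| ≤ a q + a q₀ :=
        abs_sub_le_iff.mpr ⟨by linarith [ha0 q₀], by linarith [ha0 q]⟩
      calc |a q - a q₀| * ‖f q‖ ≤ (a q + a q₀) * (A * w q) :=
            mul_le_mul hdiff (hfw q hq) (norm_nonneg _) (by linarith [ha0 q, ha0 q₀])
        _ = _ := by ring
  have hrest : ‖∑' q, ((a q - a q₀ : ℝ) : ℂ) * f q‖ ≤ X := by
    have hsum : ∑' q, (a q * w q + a q₀ * w q) = ∑' q, a q * w q + a q₀ * ∑' q, w q := by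
      rw [haw.tsum_add (hw.mul_left _), tsum_mul_left]
    rw [show X = A * ∑' q, (a q * w q + a q₀ * w q) by rw [hsum]]
    exact tsum_of_norm_bounded ((haw.add (hw.mul_left _)).hasSum.mul_left A) hterm
  have hX : 0 ≤ X :=
    mul_nonneg hA (add_nonneg (tsum_nonneg fun q => mul_nonneg (ha0 q) (hw0 q))
      (mul_nonneg (ha0 q₀) (tsum_nonneg hw0)))
  rw [norm_div, div_le_iff₀ hD0, hsplit]
  calc ‖(a q₀ : ℂ) * D + ∑' q, ((a q - a q₀ : ℝ) : ℂ) * f q‖ ≤ a q₀ * ‖D‖ + X := by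
        refine (norm_add_le _ _).trans (add_le_add ?_ hrest)
        rw [norm_mul, norm_real, Real.norm_of_nonneg (ha0 q₀)]
    _ ≤ a q₀ * ‖D‖ + X / c * ‖D‖ := by
        gcongr a q₀ * ‖D‖ + ?_
        calc X = X / c * c := (div_mul_cancel₀ _ hc.ne').symm
          _ ≤ X / c * ‖D‖ := by gcongr
    _ = _ := by ring

def periodization (ϕ : ℂ → ℂ) (z : ℂ) : ℂ := ∑' p : ℤ × ℤ, ϕ (z - latPt p)

def dampedPeriodization (ϕ : ℂ → ℂ) (ρ : ℝ) (z : ℂ) : ℂ :=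
  ∑' p : ℤ × ℤ, (((2 : ℝ) ^ (-(ρ * ‖latPt p‖)) : ℝ) : ℂ) * ϕ (z - latPt p)

lemma add_latPt_sub_latPt_add (z : ℂ) (q m : ℤ × ℤ) :
    z + latPt m - latPt (q + m) = z - latPt q := by
  rw [latPt_add]; ring

lemma periodization_add_latPt (ϕ : ℂ → ℂ) (z : ℂ) (m : ℤ × ℤ) :
    periodization ϕ (z + latPt m) = periodization ϕ z := by
  unfold periodization
  rw [← (Equiv.addRight m).tsum_eq]
  simp only [Equiv.coe_addRight, add_latPt_sub_latPt_add]

lemma dampedPeriodization_add_latPt (ϕ : ℂ → ℂ) (ρ : ℝ) (z : ℂ) (m : ℤ × ℤ) :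
    dampedPeriodization ϕ ρ (z + latPt m) =
      ∑' q : ℤ × ℤ, (((2 : ℝ) ^ (-(ρ * ‖latPt (q + m)‖)) : ℝ) : ℂ) * ϕ (z - latPt q) := by
  rw [dampedPeriodization, ← (Equiv.addRight m).tsum_eq]
  simp only [Equiv.coe_addRight, add_latPt_sub_latPt_add]

lemma exists_norm_dampedPeriodization_div_le {Ω : Set ℂ} {S : Finset ℂ} {ϕ : ℂ → ℂ}
    {b d c R : ℝ} (hper : ∀ z ∈ Ω, ∀ p : ℤ × ℤ, z + latPt p ∈ Ω) (hSQ : (S : Set ℂ) ⊆ QSet)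
    (hϕ : ContinuousOn ϕ (S : Set ℂ)ᶜ) (hb : 2 < b)
    (hdecay : ∀ z ∈ Ω, z ∉ closure QSet → (1 + ‖z‖) ^ b * ‖ϕ z‖ ≤ d)
    (hsum : ∀ z ∈ Ω \ SLat S, Summable fun p : ℤ × ℤ => ‖ϕ (z - latPt p)‖)
    (hc : 0 < c) (hlb : ∀ z ∈ Ω \ SLat S, c ≤ ‖periodization ϕ z‖) (hR : 0 ≤ R) :
    ∃ C > 0, ∀ ρ ∈ Ioc (0 : ℝ) 1, ∀ m : ℤ × ℤ, ∀ z ∈ Ω \ SLat S, ‖z‖ ≤ R →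
      ‖dampedPeriodization ϕ ρ (z + latPt m) / periodization ϕ (z + latPt m)‖ ≤
        C * ρ ^ (-b) * (1 + ‖latPt m‖) ^ (-b) := by
  have hb0 : 0 < b := by linarith
  obtain ⟨A, hA, hϕA⟩ :=
    exists_norm_sub_latPt_le_of_ne_cellIndex (R := R) hper hSQ hϕ hb0.le hdecay
  obtain ⟨C₁, hC₁, hsumC₁⟩ := tsum_two_rpow_neg_mul_le hb
  set w : ℤ × ℤ → ℝ := fun p => (1 + ‖latPt p‖) ^ (-b)
  set T := ∑' p, w p
  have hT : 0 ≤ T := tsum_nonneg fun p => by positivity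
  set A' := A * (1 + R) ^ b
  set C₀ := (1 + b / Real.log 2) ^ b * (3 + R) ^ b
  refine ⟨C₀ + A' * (C₁ + C₀ * T) / c, by positivity, fun ρ hρ m z hz hzR => ?_⟩
  have hρ0 := hρ.1
  set a : ℤ × ℤ → ℝ := fun q => (2 : ℝ) ^ (-(ρ * ‖latPt (q + m)‖))
  set q₀ := cellIndex z
  set P := ρ ^ (-b) * (1 + ‖latPt m‖) ^ (-b)
  have ha₀ : a q₀ ≤ C₀ * P := by
    have hq₀ : 1 + ‖latPt q₀‖ ≤ 3 + R := by linarith [norm_latPt_cellIndex_le z]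
    calc a q₀ ≤ (1 + b / Real.log 2) ^ b * (1 + ‖latPt q₀‖) ^ b * P := by
          simpa only [a, latPt_add, mul_assoc] using
            two_rpow_neg_mul_norm_add_le hb0 hρ (latPt q₀) (latPt m)
      _ ≤ (1 + b / Real.log 2) ^ b * (3 + R) ^ b * P := by gcongr
  have ha1 (q : ℤ × ℤ) : a q ≤ 1 :=
    Real.rpow_le_one_of_one_le_of_nonpos one_le_two
      (neg_nonpos.mpr (mul_nonneg hρ0.le (norm_nonneg _)))
  have hquot := norm_tsum_mul_div_tsum_le (a := a) (w := w) (q₀ := q₀) (A := A') (hsum z hz)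
    (fun q => by positivity) ha1 (fun q => by positivity)
    (summable_one_add_norm_latPt_rpow_neg hb) (by positivity) (hϕA z hz.1 hzR) hc (hlb z hz)
  rw [dampedPeriodization_add_latPt, periodization_add_latPt]
  calc _ ≤ a q₀ + A' * (∑' q, a q * w q + a q₀ * T) / c := hquot
    _ ≤ C₀ * P + A' * (C₁ * P + C₀ * P * T) / c := by
        gcongr
        exact (hsumC₁ ρ hρ m).trans_eq (mul_assoc _ _ _)
    _ = _ := by simp only [P]; ring

lemma le_of_forall_le_off_countable {E : Type*} [NormedAddCommGroup E] [NormedSpace ℝ E]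
    [Nontrivial E] {f : E → ℝ} {U T : Set E} {B : ℝ} {z : E} (hU : IsOpen U)
    (hT : T.Countable) (hz : z ∈ U) (hf : ContinuousAt f z) (h : ∀ y ∈ U \ T, f y ≤ B) :
    f z ≤ B :=
  ContinuousWithinAt.closure_le ((hT.dense_compl ℝ).open_subset_closure_inter hU hz)
    hf.continuousWithinAt continuousWithinAt_const h

theorem stmt5_general
    (Ω : Set ℂ) (hΩopen : IsOpen Ω)
    (hper : ∀ z ∈ Ω, ∀ p : ℤ × ℤ, z + latPt p ∈ Ω)
    (S : Finset ℂ) (hSQ : (S : Set ℂ) ⊆ QSet)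
    (ϕ : ℂ → ℂ)
    (hana : AnalyticOnNhd ℂ ϕ ((S : Set ℂ)ᶜ))
    (b d : ℝ) (hb : 2 < b)
    (hdecay : ∀ z ∈ Ω, z ∉ closure QSet →
      (1 + ‖z‖) ^ b * ‖ϕ z‖ ≤ d)
    (hsum : ∀ z ∈ Ω \ SLat S,
      Summable (fun p : ℤ × ℤ => ‖ϕ (z - latPt p)‖))
    (hlb : ∃ c > (0:ℝ), ∀ z ∈ Ω \ SLat S,
      c ≤ ‖∑' p : ℤ × ℤ, ϕ (z - latPt p)‖)
    (Ψ : ℝ → ℂ → ℂ)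
    (hΨana : ∀ ρ ∈ Set.Ioc (0:ℝ) 1, AnalyticOnNhd ℂ (Ψ ρ) Ω)
    (hΨeq : ∀ ρ ∈ Set.Ioc (0:ℝ) 1, ∀ z ∈ Ω \ SLat S,
      Ψ ρ z = (∑' p : ℤ × ℤ,
          (Complex.ofReal ((2:ℝ) ^ (-(ρ * ‖latPt p‖)))) * ϕ (z - latPt p)) /
        (∑' p : ℤ × ℤ, ϕ (z - latPt p)))
    (K : Set ℂ) (hK : IsCompact K) :
    ∃ C > (0:ℝ), ∀ ρ ∈ Set.Ioc (0:ℝ) 1, ∀ p : ℤ × ℤ, ∀ z ∈ K ∩ Ω,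
      ‖Ψ ρ (z + latPt p)‖ ≤
        C * ρ ^ (-b) * (1 + ‖latPt p‖) ^ (-b) := by
  obtain ⟨c, hc, hlbc⟩ := hlb
  obtain ⟨R, hKR⟩ := hK.isBounded.subset_ball 0
  obtain ⟨C, hC, hbound⟩ := exists_norm_dampedPeriodization_div_le (R := max R 0) hper hSQ
    hana.continuousOn hb hdecay hsum hc hlbc (le_max_right _ _)
  refine ⟨C, hC, fun ρ hρ m z ⟨hzK, hzΩ⟩ => ?_⟩
  have hcont : ContinuousAt (fun y => ‖Ψ ρ (y + latPt m)‖) z :=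
    ((hΨana ρ hρ _ (hper z hzΩ m)).continuousAt.comp (f := fun y => y + latPt m)
      (continuous_add_const (latPt m)).continuousAt).norm
  refine le_of_forall_le_off_countable (f := fun y => ‖Ψ ρ (y + latPt m)‖)
    (hΩopen.inter isOpen_ball) (countable_SLat S) ⟨hzΩ, hKR hzK⟩ hcont
    fun y ⟨⟨hyΩ, hyR⟩, hyS⟩ => ?_
  rw [hΨeq ρ hρ _ ⟨hper y hyΩ m, add_latPt_notMem_SLat hyS m⟩]
  exact hbound ρ hρ m y ⟨hyΩ, hyS⟩ ((mem_ball_zero_iff.mp hyR).le.trans (le_max_left _ _))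

/-- the decay estimate `|Ψ_ρ(z+m)| ≤ C_K ρ^{-b} (1+|m|)^{-b}` on compact sets. -/
theorem stmt5
    (Ω : Set ℂ) (hΩopen : IsOpen Ω) (hΩne : Ω.Nonempty)
    (hper : ∀ z ∈ Ω, ∀ p : ℤ × ℤ, z + latPt p ∈ Ω)
    (S : Finset ℂ) (hSQ : (S : Set ℂ) ⊆ QSet)
    (ϕ : ℂ → ℂ) (hmero : MeromorphicOn ϕ Set.univ)
    (hana : AnalyticOnNhd ℂ ϕ ((S : Set ℂ)ᶜ))
    (b d : ℝ) (hb : 2 < b) (hd : 0 ≤ d)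
    (hdecay : ∀ z ∈ Ω, z ∉ closure QSet →
      (1 + ‖z‖) ^ b * ‖ϕ z‖ ≤ d)
    (hsum : ∀ z ∈ Ω \ SLat S,
      Summable (fun p : ℤ × ℤ => ‖ϕ (z - latPt p)‖))
    (hnz : ∀ z ∈ closure Ω \ SLat S, (∑' p : ℤ × ℤ, ϕ (z - latPt p)) ≠ 0)
    (hlb : ∃ c > (0:ℝ), ∀ z ∈ Ω \ SLat S,
      c ≤ ‖∑' p : ℤ × ℤ, ϕ (z - latPt p)‖)
    (Ψ : ℝ → ℂ → ℂ)
    (hΨana : ∀ ρ ∈ Set.Ioc (0:ℝ) 1, AnalyticOnNhd ℂ (Ψ ρ) Ω)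
    (hΨeq : ∀ ρ ∈ Set.Ioc (0:ℝ) 1, ∀ z ∈ Ω \ SLat S,
      Ψ ρ z = (∑' p : ℤ × ℤ,
          (Complex.ofReal ((2:ℝ) ^ (-(ρ * ‖latPt p‖)))) * ϕ (z - latPt p)) /
        (∑' p : ℤ × ℤ, ϕ (z - latPt p)))
    (K : Set ℂ) (hK : IsCompact K) :
    ∃ C > (0:ℝ), ∀ ρ ∈ Set.Ioc (0:ℝ) 1, ∀ p : ℤ × ℤ, ∀ z ∈ K ∩ Ω,
      ‖Ψ ρ (z + latPt p)‖ ≤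
        C * ρ ^ (-b) * (1 + ‖latPt p‖) ^ (-b) :=
  stmt5_general Ω hΩopen hper S hSQ ϕ hana b d hb hdecay hsum hlb Ψ hΨana hΨeq K hK
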